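/- For all L ≥ 1, all n ≥ 0, and all y ∈ Y, one has Δ^L(S^n y) = S^{Σ_y^L(n)}(Δ^L y). -/

import Mathlib

open MeasureTheory Filter Topology
open scoped ENNReal

attribute [local instance] Classical.propDecidable

noncomputable section

/-- The shift map on bi-infinite sequences: `(S x) n = x (n+1)`. -/
def shift {α : Type*} (x : ℤ → α) : ℤ → α := fun n => x (n + 1)

/-- Shift by an arbitrary integer amount `m`. -/
def shiftZ {α : Type*} (m : ℤ) (x : ℤ → α) : ℤ → α := fun n => x (n + m)

/-- A run structure on a bi-infinite sequence `x`: `t k` is the starting index of the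
`k`-th maximal mono-symbol block of `x`, indexed so that block `0` contains position `0`. -/
structure RunStructure (x : ℤ → ℕ) where
  t : ℤ → ℤ
  mono : StrictMono t
  start_nonpos : t 0 ≤ 0
  start_pos : 0 < t 1
  const : ∀ k i : ℤ, t k ≤ i → i < t (k + 1) → x i = x (t k)
  alt : ∀ k : ℤ, x (t (k + 1)) ≠ x (t k)

/-- `d` is the run-length derivative of `x`: `d k` is the length of the `k`-th run. -/
def IsDelta (x d : ℤ → ℕ) : Prop :=
  ∃ r : RunStructure x, ∀ k : ℤ, (d k : ℤ) = r.t (k + 1) - r.t k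

/-- The run-length derivative operator `Δ` (junk value when no derivative exists). -/
def delta (x : ℤ → ℕ) : ℤ → ℕ :=
  if h : ∃ d, IsDelta x d then h.choose else fun _ => 0

/-- A bi-infinite sequence is smooth over `{1,3}` if all its iterated derivatives exist
and take values in `{1,3}`. -/
def SmoothSeq (x : ℤ → ℕ) : Prop :=
  ∀ k : ℕ, ∀ n : ℤ, delta^[k] x n = 1 ∨ delta^[k] x n = 3

/-- The set `X` of bi-infinite smooth sequences over `{1,3}`. -/
def SmoothX : Set (ℤ → ℕ) := {x | SmoothSeq x}

/-- The recoding alphabet: `A = 1`, `B = 3`, `C = 111`, `D = 333`. -/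
inductive ABCD : Type
  | A | B | C | D
deriving DecidableEq

instance : TopologicalSpace ABCD := ⊥
instance : DiscreteTopology ABCD := ⟨rfl⟩
instance : MeasurableSpace ABCD := ⊤

open ABCD

/-- The symbol (1 or 3) of the run encoded by a letter. -/
def sval : ABCD → ℕ
  | A => 1
  | B => 3
  | C => 1
  | D => 3

/-- The length (1 or 3) of the run encoded by a letter; this is also the value of `Δx`
at the corresponding position. -/
def lval : ABCD → ℕ
  | A => 1
  | B => 1
  | C => 3
  | D => 3

/-- `y` is the recoding of `x`: the letter `y k` encodes the `k`-th run of `x`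
(its symbol and its length). -/
def IsRecoding (x : ℤ → ℕ) (y : ℤ → ABCD) : Prop :=
  ∃ r : RunStructure x, ∀ k : ℤ,
    x (r.t k) = sval (y k) ∧ r.t (k + 1) - r.t k = (lval (y k) : ℤ)

/-- The recoding map `rec` (junk value when no recoding exists). -/
def recode (x : ℤ → ℕ) : ℤ → ABCD :=
  if h : ∃ y, IsRecoding x y then h.choose else fun _ => A

/-- The set `Y = rec(X)` of recodings of smooth sequences. -/
def SmoothY : Set (ℤ → ABCD) := recode '' SmoothX

/-- The derivative operator induced on recodings: since `(Δx) i = lval (rec x i)`,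
we have `Δ(rec x) = rec (Δ x) = recode (lval ∘ rec x)`. -/
def deltaY (y : ℤ → ABCD) : ℤ → ABCD := recode fun i => (lval (y i) : ℕ)

/-- `y` is well-aligned: the elementary block of `y` containing coordinate `0` starts
at position `0` (elementary blocks of `y` are exactly the runs of `Δx`, and
`(Δx) i = lval (y i)`). -/
def WellAligned (y : ℤ → ABCD) : Prop := lval (y (-1)) ≠ lval (y 0)

/-- `B_Y^L`: the set of `y ∈ Y` such that `y, Δy, ..., Δ^{L-1} y` are all well-aligned. -/
def BY (L : ℕ) : Set (ℤ → ABCD) :=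
  {y | y ∈ SmoothY ∧ ∀ l < L, WellAligned (deltaY^[l] y)}

/-- `Σ_y^L(n) = #{k ∈ [1,n] : S^k y ∈ B_Y^L}`. -/
def SigY (L : ℕ) (y : ℤ → ABCD) (n : ℕ) : ℕ :=
  ((Finset.Icc 1 n).filter fun k => shift^[k] y ∈ BY L).card

/-- `y` contains an elementary block in `{ABA, DCD}` (for `y ∈ Y`, any such factor is
automatically an elementary block). -/
def HasType0 (y : ℤ → ABCD) : Prop :=
  ∃ i : ℤ, (y i = A ∧ y (i + 1) = B ∧ y (i + 2) = A) ∨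
           (y i = D ∧ y (i + 1) = C ∧ y (i + 2) = D)

/-- `y` contains an elementary block in `{BAB, CDC}`. -/
def HasType1 (y : ℤ → ABCD) : Prop :=
  ∃ i : ℤ, (y i = B ∧ y (i + 1) = A ∧ y (i + 2) = B) ∨
           (y i = C ∧ y (i + 1) = D ∧ y (i + 2) = C)

/-- The type of a recoded sequence: `false` = type 0, `true` = type 1. -/
def typeOf (y : ℤ → ABCD) : Bool := decide (HasType1 y)

/-- The sequence of types of the successive derivatives of a smooth sequence `x`. -/
def TypesX (x : ℤ → ℕ) : ℕ → Bool := fun n => typeOf (recode (delta^[n] x))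

/-- The sequence of types of the successive derivatives of a recoded sequence `y`. -/
def TypesY (y : ℤ → ABCD) : ℕ → Bool := fun n => typeOf (deltaY^[n] y)

/-- `X_τ`: smooth bi-infinite sequences whose type sequence is exactly `τ`. -/
def Xset (τ : ℕ → Bool) : Set (ℤ → ℕ) := {x ∈ SmoothX | TypesX x = τ}

/-- `Y_τ = rec(X_τ)`. -/
def Yset (τ : ℕ → Bool) : Set (ℤ → ABCD) := recode '' Xset τ

/-- A sequence over `{A,B,C,D}` is alternating: no two consecutive symbols in `{A,C}`
and no two consecutive symbols in `{B,D}`. -/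
def Alternating (y : ℤ → ABCD) : Prop := ∀ n : ℤ, sval (y n) ≠ sval (y (n + 1))

/-- The substitutions `φ₀` and `φ₁` on letters. -/
def phiW : Bool → ABCD → List ABCD
  | false, A => [A]
  | false, B => [D]
  | false, C => [A, B, A]
  | false, D => [D, C, D]
  | true, A => [B]
  | true, B => [C]
  | true, C => [B, A, B]
  | true, D => [C, D, C]

/-- `z` is the image of the bi-infinite sequence `y` under the substitution `φ_t`, with
the convention that the image of the letter at position `0` starts at position `0`. -/
def IsSubst (t : Bool) (y z : ℤ → ABCD) : Prop :=
  ∃ u : ℤ → ℤ, u 0 = 0 ∧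
    (∀ k : ℤ, u (k + 1) = u k + (phiW t (y k)).length) ∧
    (∀ k : ℤ, ∀ j : Fin (phiW t (y k)).length, z (u k + (j : ℕ)) = (phiW t (y k)).get j)

/-- The substitution `φ_t` on bi-infinite sequences. -/
def substF (t : Bool) (y : ℤ → ABCD) : ℤ → ABCD :=
  if h : ∃ z, IsSubst t y z then h.choose else y

/-- The composition `φ_{τ₀} ∘ φ_{τ₁} ∘ ⋯ ∘ φ_{τ_{L-1}}`. -/
def substComp (τ : ℕ → Bool) : ℕ → (ℤ → ABCD) → (ℤ → ABCD)
  | 0 => id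
  | L + 1 => substF (τ 0) ∘ substComp (fun n => τ (n + 1)) L

/-- The homographies `h₀` and `h₁`. -/
def hmap : Bool → ℝ × ℝ → ℝ × ℝ
  | false, p => ((1 - p.1) / (3 - 2 * (p.1 + p.2)), (1 / 2 - p.1) / (3 - 2 * (p.1 + p.2)))
  | true, p => ((1 / 2 - p.1) / (3 - 2 * (p.1 + p.2)), (1 - p.1) / (3 - 2 * (p.1 + p.2)))

/-- The square `K = [0,1/2] × [0,1/2]`. -/
def Ksq : Set (ℝ × ℝ) := Set.Icc (0 : ℝ) (1 / 2) ×ˢ Set.Icc (0 : ℝ) (1 / 2)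

/-- The domain `E = {(a,b) ∈ K : a + b ≤ 3/4}`. -/
def Eset : Set (ℝ × ℝ) := {p ∈ Ksq | p.1 + p.2 ≤ 3 / 4}

/-- The composition `h_{t₀} ∘ h_{t₁} ∘ ⋯ ∘ h_{t_L}`. -/
def hComp (t : ℕ → Bool) : ℕ → (ℝ × ℝ → ℝ × ℝ)
  | 0 => hmap (t 0)
  | L + 1 => hComp t L ∘ hmap (t (L + 1))

/-- The point `(a(t), b(t))`, unique point of `⋂_L (h_{t₀} ∘ ⋯ ∘ h_{t_L})(E)`. -/
def abPoint (t : ℕ → Bool) : ℝ × ℝ :=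
  if h : ∃ p : ℝ × ℝ, (⋂ L : ℕ, hComp t L '' Eset) = {p} then h.choose else 0

/-- The number of occurrences of the letter `s` among positions `1, ..., m` of `z`. -/
def letterCount (s : ABCD) (z : ℤ → ABCD) (m : ℕ) : ℕ :=
  ((Finset.Icc 1 m).filter fun k => z (k : ℤ) = s).card

/-- `w` occurs as a factor of `y` at position `i`. -/
def IsFactorAt (w : List ABCD) (y : ℤ → ABCD) (i : ℤ) : Prop :=
  ∀ j : Fin w.length, y (i + (j : ℕ)) = w.get j

/-- The cylinder set `[w]` in `{1,3}^ℤ`. -/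
def cylX (w : List ℕ) : Set (ℤ → ℕ) :=
  {x | ∀ j : Fin w.length, x ((j : ℕ) : ℤ) = w.get j}

/-- The cylinder set `[w]` in `{A,B,C,D}^ℤ`. -/
def cylY (w : List ABCD) : Set (ℤ → ABCD) :=
  {y | ∀ j : Fin w.length, y ((j : ℕ) : ℤ) = w.get j}

/-- The number of occurrences of the finite word `w` in the prefix `x₀ ⋯ x_{n-1}`. -/
def occCount (x : ℤ → ℕ) (w : List ℕ) (n : ℕ) : ℕ :=
  ((Finset.range n).filter fun i =>
    i + w.length ≤ n ∧ ∀ j : Fin w.length, x (((i + (j : ℕ) : ℕ)) : ℤ) = w.get j).card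

/-- A subshift `Z` is minimal if it contains no nonempty proper closed shift-invariant
subset. -/
def ShiftMinimal {α : Type*} [TopologicalSpace α] (Z : Set (ℤ → α)) : Prop :=
  ∀ W : Set (ℤ → α), W ⊆ Z → W.Nonempty → IsClosed W → shift '' W = W → W = Z

/-!
For `y = rec x`, the runs of `Δx` are the elementary blocks of `y`, and `Δ(S y)` is the recoding
of `Δx` read from position `1`. If position `1` starts a run of `Δx` (that is, `S y` is
well-aligned), this is `S (Δ y)`; otherwise positions `0` and `1` lie in the same run and
`Δ(S y) = Δ y`. Applying this at every level gives `Δ^L (S y) = S^ε (Δ^L y)` with `ε = 1`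
exactly when `S y ∈ B_Y^L`, and composing `n` such steps gives the formula.

All of this rests on the uniqueness of run structures: run starts are exactly the positions where
the symbol changes, and the normalisation `t 0 ≤ 0 < t 1` fixes their indexing.
-/

theorem StrictMono.int_add_sub_le {f : ℤ → ℤ} (hf : StrictMono f) {a b : ℤ}
    (hab : a ≤ b) : f a + (b - a) ≤ f b := by
  induction b, hab using Int.leInduction with
  | base => simp
  | succ b _ ih => have := hf (lt_add_one b); omega

theorem StrictMono.exists_apply_le_lt_apply_succ {f : ℤ → ℤ} (hf : StrictMono f) (m : ℤ) :
    ∃ j, f j ≤ m ∧ m < f (j + 1) := by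
  have hbdd : ∃ b, ∀ j, f j ≤ m → j ≤ b := by
    refine ⟨max 0 (m - f 0), fun j hj => ?_⟩
    by_contra! h
    have := hf.int_add_sub_le (a := 0) (b := j) (by omega)
    omega
  have hne : ∃ j, f j ≤ m := by
    refine ⟨min 0 (m - f 0), ?_⟩
    have := hf.int_add_sub_le (a := min 0 (m - f 0)) (b := 0) (by omega)
    omega
  obtain ⟨j, hj, hmax⟩ := Int.exists_greatest_of_bdd hbdd hne
  exact ⟨j, hj, lt_of_not_ge fun h => by have := hmax _ h; omega⟩

namespace RunStructure

variable {x : ℤ → ℕ} (r r' : RunStructure x)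

theorem apply_sub_one_ne (k : ℤ) : x (r.t k - 1) ≠ x (r.t k) := by
  have hprev := r.const (k - 1) (r.t k - 1)
    (by have := r.mono (sub_one_lt k); omega) (by simp)
  have halt := r.alt (k - 1)
  rw [sub_add_cancel] at halt
  rw [hprev]
  exact halt.symm

theorem exists_t_eq {i : ℤ} (hi : x (i - 1) ≠ x i) : ∃ k, r.t k = i := by
  obtain ⟨k, hk, hk'⟩ := r.mono.exists_apply_le_lt_apply_succ i
  refine ⟨k, le_antisymm hk (le_of_not_gt fun h => hi ?_)⟩
  rw [r.const k (i - 1) (by omega) (by omega), r.const k i hk hk']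

theorem t_zero_le : r.t 0 ≤ r'.t 0 := by
  obtain ⟨c, hc⟩ := r'.exists_t_eq (r.apply_sub_one_ne 0)
  have hc1 : c < 1 :=
    r'.mono.lt_iff_lt.1 (by have := r.start_nonpos; have := r'.start_pos; omega)
  rw [← hc]
  exact r'.mono.monotone (by omega)

theorem t_succ_le {k : ℤ} (hk : r.t k = r'.t k) : r.t (k + 1) ≤ r'.t (k + 1) := by
  obtain ⟨a, ha⟩ := r.exists_t_eq (r'.apply_sub_one_ne (k + 1))
  have hka : k < a := r.mono.lt_iff_lt.1 (by rw [hk, ha]; exact r'.mono (lt_add_one k))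
  rw [← ha]
  exact r.mono.monotone (by omega)

theorem t_pred_le {k : ℤ} (hk : r.t k = r'.t k) : r'.t (k - 1) ≤ r.t (k - 1) := by
  obtain ⟨a, ha⟩ := r.exists_t_eq (r'.apply_sub_one_ne (k - 1))
  have hak : a < k := r.mono.lt_iff_lt.1 (by rw [hk, ha]; exact r'.mono (sub_one_lt k))
  rw [← ha]
  exact r.mono.monotone (by omega)

theorem t_eq : r.t = r'.t := by
  funext k
  induction k using Int.induction_on with
  | zero => exact le_antisymm (r.t_zero_le r') (r'.t_zero_le r)
  | succ k ih => exact le_antisymm (r.t_succ_le r' ih) (r'.t_succ_le r ih.symm)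
  | pred k ih => exact le_antisymm (r'.t_pred_le r ih.symm) (r.t_pred_le r' ih)

instance : Subsingleton (RunStructure x) := ⟨fun r r' => by
  have h := r.t_eq r'
  cases r
  cases r'
  subst h
  rfl⟩

theorem t_one_eq_one_iff : r.t 1 = 1 ↔ x 0 ≠ x 1 := by
  have hx0 : x 0 = x (r.t 0) := r.const 0 0 r.start_nonpos (by simpa using r.start_pos)
  refine ⟨fun h => by simpa [h, ← hx0] using (r.alt 0).symm, fun h => ?_⟩
  by_contra h1
  have hx1 : x 1 = x (r.t 0) :=
    r.const 0 1 (by linarith [r.start_nonpos]) (by have := r.start_pos; rw [zero_add]; omega)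
  exact h (hx0.trans hx1.symm)

def reindex {m j : ℤ} (hm : r.t j ≤ m) (hm' : m < r.t (j + 1)) : RunStructure (shiftZ m x) where
  t k := r.t (k + j) - m
  mono a b hab := by simpa using r.mono (by omega : a + j < b + j)
  start_nonpos := by simpa using hm
  start_pos := by simpa [add_comm] using hm'
  const k i hki hik := by
    simp only [shiftZ, sub_add_cancel]
    exact r.const (k + j) (i + m) (by omega) (by rw [add_right_comm]; omega)
  alt k := by simpa [shiftZ, add_right_comm] using r.alt (k + j)

end RunStructure

section Derivative

variable {x : ℤ → ℕ}

theorem IsDelta.unique {d d' : ℤ → ℕ} (h : IsDelta x d) (h' : IsDelta x d') : d = d' := by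
  obtain ⟨r, hr⟩ := h
  obtain ⟨r', hr'⟩ := h'
  obtain rfl := Subsingleton.elim r r'
  funext k
  exact_mod_cast (hr k).trans (hr' k).symm

theorem delta_eq {d : ℤ → ℕ} (h : IsDelta x d) : delta x = d := by
  have hex : ∃ d, IsDelta x d := ⟨d, h⟩
  rw [delta, dif_pos hex]
  exact hex.choose_spec.unique h

theorem SmoothSeq.isDelta (hx : SmoothSeq x) : IsDelta x (delta x) := by
  by_cases hex : ∃ d, IsDelta x d
  · rw [delta_eq hex.choose_spec]
    exact hex.choose_spec
  · have h := hx 1 0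
    simp [delta, dif_neg hex] at h

theorem smoothSeq_delta (hx : SmoothSeq x) : SmoothSeq (delta x) := fun k => hx (k + 1)

theorem isDelta_shiftZ {d : ℤ → ℕ} (h : IsDelta x d) (m : ℤ) :
    ∃ j, IsDelta (shiftZ m x) (shiftZ j d) := by
  obtain ⟨r, hr⟩ := h
  obtain ⟨j, hj, hj'⟩ := r.mono.exists_apply_le_lt_apply_succ m
  refine ⟨j, r.reindex hj hj', fun k => ?_⟩
  change ((d (k + j) : ℕ) : ℤ) = (r.t (k + 1 + j) - m) - (r.t (k + j) - m)
  rw [hr, add_right_comm]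
  ring

theorem SmoothSeq.iterate_delta_shiftZ (hx : SmoothSeq x) (k : ℕ) (m : ℤ) :
    ∃ j, delta^[k] (shiftZ m x) = shiftZ j (delta^[k] x) := by
  induction k generalizing x m with
  | zero => exact ⟨m, rfl⟩
  | succ k ih =>
    obtain ⟨j, hj⟩ := isDelta_shiftZ hx.isDelta m
    obtain ⟨j', hj'⟩ := ih (smoothSeq_delta hx) j
    refine ⟨j', ?_⟩
    rw [Function.iterate_succ_apply, delta_eq hj, hj', Function.iterate_succ_apply]

theorem smoothSeq_shiftZ (hx : SmoothSeq x) (m : ℤ) : SmoothSeq (shiftZ m x) := by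
  intro k n
  obtain ⟨j, hj⟩ := hx.iterate_delta_shiftZ k m
  rw [hj]
  exact hx k (n + j)

end Derivative

section Recoding

variable {x : ℤ → ℕ} {y : ℤ → ABCD}

theorem exists_sval_lval {s l : ℕ} (hs : s = 1 ∨ s = 3) (hl : l = 1 ∨ l = 3) :
    ∃ a, sval a = s ∧ lval a = l := by
  rcases hs with rfl | rfl <;> rcases hl with rfl | rfl
  exacts [⟨A, rfl, rfl⟩, ⟨C, rfl, rfl⟩, ⟨B, rfl, rfl⟩, ⟨D, rfl, rfl⟩]

theorem ABCD.ext_sval_lval {a b : ABCD} (hs : sval a = sval b) (hl : lval a = lval b) :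
    a = b := by
  cases a <;> cases b <;> simp_all [sval, lval]

theorem IsRecoding.unique {y' : ℤ → ABCD} (h : IsRecoding x y) (h' : IsRecoding x y') :
    y = y' := by
  obtain ⟨r, hr⟩ := h
  obtain ⟨r', hr'⟩ := h'
  obtain rfl := Subsingleton.elim r r'
  funext k
  exact ABCD.ext_sval_lval ((hr k).1.symm.trans (hr' k).1)
    (by exact_mod_cast (hr k).2.symm.trans (hr' k).2)

theorem recode_eq (h : IsRecoding x y) : recode x = y := by
  have hex : ∃ y, IsRecoding x y := ⟨y, h⟩
  rw [recode, dif_pos hex]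
  exact hex.choose_spec.unique h

theorem SmoothSeq.isRecoding (hx : SmoothSeq x) : IsRecoding x (recode x) := by
  obtain ⟨r, hr⟩ := hx.isDelta
  have hletter : ∀ k, ∃ a, sval a = x (r.t k) ∧ lval a = delta x k := fun k =>
    exists_sval_lval (hx 0 (r.t k)) (hx 1 k)
  choose y hy using hletter
  have h : IsRecoding x y := ⟨r, fun k => ⟨(hy k).1.symm, by rw [(hy k).2, hr]⟩⟩
  rwa [recode_eq h]

theorem SmoothSeq.lval_recode (hx : SmoothSeq x) (k : ℤ) : lval (recode x k) = delta x k := by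
  obtain ⟨r, hr⟩ := hx.isRecoding
  obtain ⟨r', hr'⟩ := hx.isDelta
  obtain rfl := Subsingleton.elim r r'
  exact_mod_cast (hr k).2.symm.trans (hr' k).symm

theorem isRecoding_shiftZ (h : IsRecoding x y) (r : RunStructure x) {m j : ℤ}
    (hm : r.t j ≤ m) (hm' : m < r.t (j + 1)) : IsRecoding (shiftZ m x) (shiftZ j y) := by
  obtain ⟨r₀, hr⟩ := h
  obtain rfl := Subsingleton.elim r r₀
  refine ⟨r.reindex hm hm', fun k => ?_⟩
  change x (r.t (k + j) - m + m) = sval (y (k + j)) ∧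
    (r.t (k + 1 + j) - m) - (r.t (k + j) - m) = lval (y (k + j))
  rw [sub_add_cancel, add_right_comm, ← (hr (k + j)).2]
  exact ⟨(hr (k + j)).1, by ring⟩

theorem recode_shiftZ (hx : SmoothSeq x) (r : RunStructure x) {m j : ℤ}
    (hm : r.t j ≤ m) (hm' : m < r.t (j + 1)) : recode (shiftZ m x) = shiftZ j (recode x) :=
  recode_eq (isRecoding_shiftZ hx.isRecoding r hm hm')

theorem SmoothSeq.deltaY_recode (hx : SmoothSeq x) : deltaY (recode x) = recode (delta x) :=
  congrArg recode (funext hx.lval_recode)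

end Recoding

theorem shiftZ_zero {α : Type*} (x : ℤ → α) : shiftZ 0 x = x :=
  funext fun n => congrArg x (add_zero n)

theorem mapsTo_deltaY_smoothY : Set.MapsTo deltaY SmoothY SmoothY := by
  rintro _ ⟨x, hx, rfl⟩
  exact ⟨delta x, smoothSeq_delta hx, hx.deltaY_recode.symm⟩

theorem mapsTo_shift_smoothY : Set.MapsTo shift SmoothY SmoothY := by
  rintro _ ⟨x, hx, rfl⟩
  obtain ⟨r, -⟩ := hx.isDelta
  exact ⟨shiftZ (r.t 1) x, smoothSeq_shiftZ hx _,
    recode_shiftZ hx r le_rfl (r.mono (lt_add_one 1))⟩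

theorem deltaY_shift {w : ℤ → ABCD} (hw : w ∈ SmoothY) :
    deltaY (shift w) = if WellAligned (shift w) then shift (deltaY w) else deltaY w := by
  obtain ⟨v, hv, rfl⟩ := hw
  have hz := smoothSeq_delta hv
  obtain ⟨s, -⟩ := hz.isDelta
  have hshift : deltaY (shift (recode v)) = recode (shiftZ 1 (delta v)) :=
    congrArg recode (funext fun i => hv.lval_recode (i + 1))
  have hWA : WellAligned (shift (recode v)) ↔ delta v 0 ≠ delta v 1 := by
    simp only [WellAligned, shift, hv.lval_recode]
    norm_num
  rw [hshift, hv.deltaY_recode, hWA]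
  split_ifs with h
  · have h1 := s.t_one_eq_one_iff.2 h
    exact recode_shiftZ hz s h1.le (by simpa [h1] using s.mono (lt_add_one 1))
  · have h1 : s.t 1 ≠ 1 := fun h1 => h (s.t_one_eq_one_iff.1 h1)
    rw [← shiftZ_zero (recode (delta v))]
    exact recode_shiftZ hz s (by linarith [s.start_nonpos])
      (by rw [zero_add]; have := s.start_pos; omega)

theorem mem_BY_succ_iff {L : ℕ} {w : ℤ → ABCD} (hw : w ∈ SmoothY) :
    w ∈ BY (L + 1) ↔ WellAligned w ∧ deltaY w ∈ BY L := by
  simp only [BY, Set.mem_ofPred_eq, Nat.forall_lt_succ_left, Function.iterate_zero, id_eq,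
    Function.iterate_succ_apply, hw, mapsTo_deltaY_smoothY hw, true_and]

theorem iterate_deltaY_shift (L : ℕ) {w : ℤ → ABCD} (hw : w ∈ SmoothY) :
    deltaY^[L] (shift w) = shift^[if shift w ∈ BY L then 1 else 0] (deltaY^[L] w) := by
  induction L generalizing w with
  | zero => simp [BY, mapsTo_shift_smoothY hw]
  | succ L ih =>
    rw [mem_BY_succ_iff (mapsTo_shift_smoothY hw), Function.iterate_succ_apply,
      Function.iterate_succ_apply, deltaY_shift hw]
    by_cases hWA : WellAligned (shift w)
    · simp only [hWA, if_true, true_and]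
      exact ih (mapsTo_deltaY_smoothY hw)
    · simp [hWA]

theorem sigY_succ (L : ℕ) (y : ℤ → ABCD) (n : ℕ) :
    SigY L y (n + 1) = SigY L y n + if shift^[n + 1] y ∈ BY L then 1 else 0 := by
  simp only [SigY, Finset.card_filter]
  exact Finset.sum_Icc_succ_top (by omega) _

theorem stmt1_general (L : ℕ) (n : ℕ) (y : ℤ → ABCD) (hy : y ∈ SmoothY) :
    deltaY^[L] (shift^[n] y) = shift^[SigY L y n] (deltaY^[L] y) := by
  induction n with
  | zero => simp [SigY]
  | succ n ih =>
    rw [sigY_succ, Function.iterate_succ_apply' shift n,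
      iterate_deltaY_shift L (mapsTo_shift_smoothY.iterate n hy), ih,
      ← Function.iterate_add_apply, ← Function.iterate_succ_apply' shift n, add_comm]

/-- Commutation formula.
For all `L ≥ 1`, all `n ≥ 0` and all `y ∈ Y`, `Δ^L (S^n y) = S^{Σ_y^L(n)} (Δ^L y)`. -/
theorem stmt1 (L : ℕ) (hL : 1 ≤ L) (n : ℕ) (y : ℤ → ABCD) (hy : y ∈ SmoothY) :
    deltaY^[L] (shift^[n] y) = shift^[SigY L y n] (deltaY^[L] y) :=
  stmt1_general L n y hy
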